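/- arXiv:1604.06524 — 2 statements merged into one kernel-verified Lean document; each statement's English description precedes it below -/
import Mathlib

section
/- Let Φ be a quantum operation on 2×2 complex matrices. Then Φ is a maximally incoherent operation (i.e. Φ(δ) is diagonal for every diagonal qubit density matrix δ) if and only if C_{l1}(Φ(ρ)) ≤ C_{l1}(ρ) for every qubit density matrix ρ. In particular, the l1-coherence is monotone (non-increasing) under MIO, and hence under DIO, on single qubit systems. -/
open Matrix BigOperators ComplexOrder

/-- The l1-coherence of a matrix: the sum of the absolute values of its
off-diagonal entries. -/
noncomputable def Cl1 {n : ℕ} (A : Matrix (Fin n) (Fin n) ℂ) : ℝ :=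
  ∑ i, ∑ j, if i ≠ j then ‖A i j‖ else 0

/-- A density matrix: positive semidefinite with trace 1. -/
def IsDensity {n : ℕ} (ρ : Matrix (Fin n) (Fin n) ℂ) : Prop :=
  ρ.PosSemidef ∧ ρ.trace = 1

/-- A quantum operation (CPTP map) given by a finite family of Kraus operators. -/
def IsQuantumOp {n : ℕ} (Φ : Matrix (Fin n) (Fin n) ℂ → Matrix (Fin n) (Fin n) ℂ) : Prop :=
  ∃ (m : ℕ) (K : Fin m → Matrix (Fin n) (Fin n) ℂ),
    (∑ i, (K i)ᴴ * K i) = 1 ∧ ∀ ρ, Φ ρ = ∑ i, K i * ρ * (K i)ᴴ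

/-- The dephasing map `Δ`, keeping only the diagonal part of a matrix. -/
def Deph {n : ℕ} (A : Matrix (Fin n) (Fin n) ℂ) : Matrix (Fin n) (Fin n) ℂ :=
  Matrix.of fun i j => if i = j then A i j else 0

/-!
Diagonal density matrices span the diagonal matrices, so a Kraus map that is MIO sends every
diagonal matrix to a diagonal one. A Hermitian qubit matrix `ρ` with off-diagonal entry `c`
differs by a diagonal matrix from the rank-one positive matrix `σ = !![|c|, c; c̄, |c|]`, so
`Φ ρ` and `Φ σ` have the same off-diagonal entries, and for the positive matrix `Φ σ` we get
`C_l1(Φ σ) ≤ tr (Φ σ) = tr σ = 2|c| = C_l1(ρ)`. Conversely, monotonicity gives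
`C_l1(Φ δ) ≤ C_l1(δ) = 0` for diagonal `δ`. A DIO commutes with `Δ`, hence preserves its range
and is MIO.
-/

section Cl1

variable {n : ℕ}

lemma Cl1_nonneg (A : Matrix (Fin n) (Fin n) ℂ) : 0 ≤ Cl1 A :=
  Finset.sum_nonneg fun _ _ => Finset.sum_nonneg fun _ _ => by split_ifs <;> positivity

lemma Cl1_eq_zero_iff {A : Matrix (Fin n) (Fin n) ℂ} : Cl1 A = 0 ↔ A.IsDiag := by
  have hterm (i j : Fin n) : 0 ≤ if i ≠ j then ‖A i j‖ else 0 := by split_ifs <;> positivity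
  simp only [Cl1, Finset.mem_univ, true_implies,
    Finset.sum_eq_zero_iff_of_nonneg fun i _ => Finset.sum_nonneg fun j _ => hterm i j,
    Finset.sum_eq_zero_iff_of_nonneg fun j _ => hterm _ j]
  exact forall₂_congr fun i j => by by_cases h : i = j <;> simp [h]

lemma Cl1_add_of_isDiag {A D : Matrix (Fin n) (Fin n) ℂ} (hD : D.IsDiag) :
    Cl1 (A + D) = Cl1 A := by
  refine Finset.sum_congr rfl fun i _ => Finset.sum_congr rfl fun j _ => ?_
  split_ifs with h
  · rw [Matrix.add_apply, hD h, add_zero]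
  · rfl

lemma Cl1_fin_two (A : Matrix (Fin 2) (Fin 2) ℂ) : Cl1 A = ‖A 0 1‖ + ‖A 1 0‖ := by
  simp [Cl1, Fin.sum_univ_two]

end Cl1

section Kraus

variable {n ι : Type*} [Fintype n] [Fintype ι] (K : ι → Matrix n n ℂ)

def krausMap : Matrix n n ℂ →ₗ[ℂ] Matrix n n ℂ where
  toFun ρ := ∑ i, K i * ρ * (K i)ᴴ
  map_add' A B := by simp only [Matrix.mul_add, Matrix.add_mul, Finset.sum_add_distrib]
  map_smul' z A := by simp [Finset.smul_sum]

lemma krausMap_apply (ρ : Matrix n n ℂ) : krausMap K ρ = ∑ i, K i * ρ * (K i)ᴴ := rfl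

lemma trace_krausMap [DecidableEq n] (hK : ∑ i, (K i)ᴴ * K i = 1) (A : Matrix n n ℂ) :
    (krausMap K A).trace = A.trace := by
  rw [krausMap_apply, trace_sum]
  simp_rw [trace_mul_cycle (K _) A]
  rw [← trace_sum, ← Finset.sum_mul, hK, Matrix.one_mul]

lemma posSemidef_krausMap {A : Matrix n n ℂ} (hA : A.PosSemidef) :
    (krausMap K A).PosSemidef :=
  posSemidef_sum _ fun i _ => hA.mul_mul_conjTranspose_same (K i)

end Kraus

lemma isDensity_single {n : ℕ} (i : Fin n) : IsDensity (single i i (1 : ℂ)) := by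
  refine ⟨?_, trace_single_eq_same i 1⟩
  rw [← diagonal_single]
  exact PosSemidef.diagonal fun j => by rw [Pi.single_apply]; split_ifs <;> simp

lemma isDiag_map_of_isDiag {n : ℕ}
    (f : Matrix (Fin n) (Fin n) ℂ →ₗ[ℂ] Matrix (Fin n) (Fin n) ℂ)
    (hf : ∀ δ, IsDensity δ → δ.IsDiag → (f δ).IsDiag) {A : Matrix (Fin n) (Fin n) ℂ}
    (hA : A.IsDiag) : (f A).IsDiag := by
  rw [← hA.diagonal_diag, ← sum_single_eq_diagonal, map_sum]
  refine Finset.sum_induction _ IsDiag (fun _ _ => IsDiag.add) isDiag_zero fun i _ => ?_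
  rw [show single i i (A.diag i) = A.diag i • single i i 1 by simp, map_smul]
  exact (hf _ (isDensity_single i) (diagonal_single i (1 : ℂ) ▸ isDiag_diagonal _)).smul _

/-- Positivity gives `|τ₀₁|² ≤ τ₀₀ τ₁₁` (from `det τ ≥ 0`), and AM-GM finishes. -/
lemma Matrix.PosSemidef.Cl1_le_re_trace {τ : Matrix (Fin 2) (Fin 2) ℂ} (hτ : τ.PosSemidef) :
    Cl1 τ ≤ τ.trace.re := by
  have h10 : τ 1 0 = star (τ 0 1) := (hτ.isHermitian.apply 1 0).symm
  obtain ⟨h00, h00'⟩ := Complex.nonneg_iff.1 (hτ.diag_nonneg (i := 0))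
  obtain ⟨h11, h11'⟩ := Complex.nonneg_iff.1 (hτ.diag_nonneg (i := 1))
  have hdet := hτ.det_nonneg
  rw [det_fin_two, h10, Complex.star_def, Complex.mul_conj, Complex.normSq_eq_norm_sq,
    Complex.nonneg_iff] at hdet
  simp only [Complex.sub_re, Complex.mul_re, ← h00', ← h11', Complex.ofReal_re, mul_zero,
    sub_zero] at hdet
  rw [Cl1_fin_two, h10, norm_star, trace_fin_two, Complex.add_re]
  nlinarith [norm_nonneg (τ 0 1), hdet.1, sq_nonneg ((τ 0 0).re - (τ 1 1).re)]

noncomputable def coherentPart (c : ℂ) : Matrix (Fin 2) (Fin 2) ℂ :=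
  !![(‖c‖ : ℂ), c; star c, ‖c‖]

lemma posSemidef_coherentPart (c : ℂ) : (coherentPart c).PosSemidef := by
  set v : Fin 2 → ℂ := ![(√‖c‖ : ℂ), star c / √‖c‖]
  suffices coherentPart c = vecMulVec v (star v) from this ▸ posSemidef_vecMulVec_self_star v
  have hsq : (√‖c‖ : ℂ) * √‖c‖ = ‖c‖ := by
    rw [← Complex.ofReal_mul, Real.mul_self_sqrt (norm_nonneg c)]
  ext i j
  rcases eq_or_ne c 0 with rfl | hc
  · fin_cases i <;> fin_cases j <;> simp [coherentPart, v, vecMulVec_apply]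
  have hs : (√‖c‖ : ℂ) ≠ 0 := by simpa using hc
  fin_cases i <;> fin_cases j <;> simp [coherentPart, v, vecMulVec_apply, div_mul_div_comm, hsq,
    mul_div_cancel₀ _ hs, div_mul_cancel₀ _ hs, Complex.conj_mul', sq, hc]

lemma re_trace_coherentPart (c : ℂ) : (coherentPart c).trace.re = 2 * ‖c‖ := by
  simp [coherentPart, trace_fin_two, two_mul]

lemma Matrix.IsHermitian.isDiag_sub_coherentPart {ρ : Matrix (Fin 2) (Fin 2) ℂ}
    (hρ : ρ.IsHermitian) : (ρ - coherentPart (ρ 0 1)).IsDiag := by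
  intro i j hij
  fin_cases i <;> fin_cases j <;> simp_all [coherentPart, ← hρ.apply 0 1]

lemma Matrix.IsHermitian.Cl1_eq {ρ : Matrix (Fin 2) (Fin 2) ℂ} (hρ : ρ.IsHermitian) :
    Cl1 ρ = 2 * ‖ρ 0 1‖ := by
  rw [Cl1_fin_two, ← hρ.apply 0 1, norm_star]
  ring

theorem Cl1_map_le (f : Matrix (Fin 2) (Fin 2) ℂ →ₗ[ℂ] Matrix (Fin 2) (Fin 2) ℂ)
    (hdiag : ∀ A, A.IsDiag → (f A).IsDiag) (htrace : ∀ A, (f A).trace = A.trace)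
    (hpsd : ∀ A, A.PosSemidef → (f A).PosSemidef) {ρ : Matrix (Fin 2) (Fin 2) ℂ}
    (hρ : ρ.IsHermitian) : Cl1 (f ρ) ≤ Cl1 ρ := by
  set σ := coherentPart (ρ 0 1)
  calc Cl1 (f ρ) = Cl1 (f σ + f (ρ - σ)) := by rw [← map_add, add_sub_cancel]
    _ = Cl1 (f σ) := Cl1_add_of_isDiag (hdiag _ hρ.isDiag_sub_coherentPart)
    _ ≤ (f σ).trace.re := (hpsd σ (posSemidef_coherentPart _)).Cl1_le_re_trace
    _ = Cl1 ρ := by rw [htrace, re_trace_coherentPart, hρ.Cl1_eq]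

lemma isDiag_Deph {n : ℕ} (A : Matrix (Fin n) (Fin n) ℂ) : (Deph A).IsDiag := fun i j h => by
  simp [Deph, h]

lemma Matrix.IsDiag.Deph_eq {n : ℕ} {A : Matrix (Fin n) (Fin n) ℂ} (hA : A.IsDiag) :
    Deph A = A := by
  ext i j
  by_cases h : i = j
  · simp [Deph, h]
  · simp [Deph, h, hA h]

theorem l1_monotone_iff_MIO_qubit
    (Φ : Matrix (Fin 2) (Fin 2) ℂ → Matrix (Fin 2) (Fin 2) ℂ)
    (hΦ : IsQuantumOp Φ) :
    ((∀ δ : Matrix (Fin 2) (Fin 2) ℂ, IsDensity δ → δ.IsDiag → (Φ δ).IsDiag) ↔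
      (∀ ρ : Matrix (Fin 2) (Fin 2) ℂ, IsDensity ρ → Cl1 (Φ ρ) ≤ Cl1 ρ)) ∧
    ((∀ A : Matrix (Fin 2) (Fin 2) ℂ, Φ (Deph A) = Deph (Φ A)) →
      ∀ ρ : Matrix (Fin 2) (Fin 2) ℂ, IsDensity ρ → Cl1 (Φ ρ) ≤ Cl1 ρ) := by
  obtain ⟨m, K, hK, hΦ⟩ := hΦ
  obtain rfl : Φ = krausMap K := funext hΦ
  have monotone_of_MIO (hMIO : ∀ δ, IsDensity δ → δ.IsDiag → (krausMap K δ).IsDiag)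
      (ρ : Matrix (Fin 2) (Fin 2) ℂ) (hρ : IsDensity ρ) : Cl1 (krausMap K ρ) ≤ Cl1 ρ :=
    Cl1_map_le _ (fun _ => isDiag_map_of_isDiag _ hMIO) (trace_krausMap K hK)
      (fun _ => posSemidef_krausMap K) hρ.1.isHermitian
  refine ⟨⟨monotone_of_MIO, fun hmono δ hδ hδdiag => ?_⟩, fun hDIO => monotone_of_MIO ?_⟩
  · have hle := hmono δ hδ
    rw [Cl1_eq_zero_iff.2 hδdiag] at hle
    exact Cl1_eq_zero_iff.1 (hle.antisymm (Cl1_nonneg _))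
  · intro δ _ hδdiag
    rw [← hδdiag.Deph_eq, hDIO]
    exact isDiag_Deph _
end

section
/- For every 2×2 complex unitary U written (up to a global phase) as U = [[a, b], [−conj(b), conj(a)]] with |a|² + |b|² = 1, and every θ ∈ ℝ: 1 − H(|(U ψ_θ)₀|²) ≤ H(|a|²). That is, for qubit unitary operations the cohering power in the relative entropy of coherence is always at least the de-cohering power: C_r(U) = H(|a|²) ≥ 1 − H(1/2 + |a||b|) = D_r(U); equivalently H(|a|²) + H(1/2 + |a||b|) ≥ 1. -/
open Matrix BigOperators ComplexOrder

/-- The maximally coherent qubit state vector `(1/√2)(1, e^{iθ})`. -/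
noncomputable def psi (θ : ℝ) : Fin 2 → ℂ :=
  ![1 / (Real.sqrt 2 : ℂ), Complex.exp (θ * Complex.I) / (Real.sqrt 2 : ℂ)]

/-- The outer product `w w†` of a vector with itself. -/
def outer {n : ℕ} (w : Fin n → ℂ) : Matrix (Fin n) (Fin n) ℂ :=
  Matrix.vecMulVec w (star w)

/-- The qubit unitary `[[a, b], [-conj b, conj a]]`. -/
def Uab (a b : ℂ) : Matrix (Fin 2) (Fin 2) ℂ :=
  !![a, b; -(starRingEnd ℂ) b, (starRingEnd ℂ) a]

/-- The binary entropy (base 2), with the convention `0 · log 0 = 0`. -/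
noncomputable def H (x : ℝ) : ℝ :=
  -(x * Real.logb 2 x) - (1 - x) * Real.logb 2 (1 - x)

/-!
The binary entropy dominates the parabola: `H x ≥ 4 x (1 - x)` on `[0, 1]`. Writing
`|(U ψ_θ)₀|² = 1/2 + r`, a direct computation gives `|r| ≤ |a| |b|`, hence
`H (1/2 + r) ≥ 1 - 4 r² ≥ 1 - 4 |a|² |b|² ≥ 1 - H (|a|²)`.
-/

open Real Set

section IntegralLog

variable {c d : ℝ}

lemma add_mul_pos_of_mem_Icc (hc : 0 < c) (hcd : 0 < c + d) {t : ℝ} (ht : t ∈ Icc (0 : ℝ) 1) :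
    0 < c + t * d := by
  rcases le_total 0 d with hd | hd <;> nlinarith [ht.1, ht.2]

lemma intervalIntegrable_div_add_mul (hc : 0 < c) (hcd : 0 < c + d) :
    IntervalIntegrable (fun t => d / (c + t * d)) MeasureTheory.volume 0 1 := by
  refine ContinuousOn.intervalIntegrable (continuousOn_const.div (by fun_prop) fun t ht => ?_)
  rw [uIcc_of_le zero_le_one] at ht
  exact (add_mul_pos_of_mem_Icc hc hcd ht).ne'

lemma integral_div_add_mul (hc : 0 < c) (hcd : 0 < c + d) :
    ∫ t in (0 : ℝ)..1, d / (c + t * d) = log (c + d) - log c := by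
  have hderiv : ∀ t ∈ uIcc (0 : ℝ) 1,
      HasDerivAt (fun t => log (c + t * d)) (d / (c + t * d)) t := by
    intro t ht
    rw [uIcc_of_le zero_le_one] at ht
    have hlin : HasDerivAt (fun t : ℝ => c + t * d) d t := by
      simpa using ((hasDerivAt_id t).mul_const d).const_add c
    exact hlin.log (add_mul_pos_of_mem_Icc hc hcd ht).ne'
  simpa using intervalIntegral.integral_eq_sub_of_hasDerivAt hderiv
    (intervalIntegrable_div_add_mul hc hcd)

end IntegralLog

lemma four_div_add_le_inv_add_inv {x y : ℝ} (hx : 0 < x) (hy : 0 < y) :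
    4 / (x + y) ≤ x⁻¹ + y⁻¹ := by
  rw [inv_add_inv hx.ne' hy.ne', div_le_div_iff₀ (by positivity) (by positivity)]
  nlinarith [sq_nonneg (x - y)]

/- With `q = 1 - p`, the numbers `-log p`, `-log q` and `log 2` are the integrals over `[0, 1]`
of `q / (p + t q)`, `p / (q + t p)` and `1 / (1 + t)`, and the two denominators sum to `1 + t`. -/
theorem Real.four_mul_log_two_mul_le_binEntropy {p : ℝ} (hp₀ : 0 ≤ p) (hp₁ : p ≤ 1) :
    4 * log 2 * (p * (1 - p)) ≤ binEntropy p := by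
  rcases hp₀.eq_or_lt with rfl | hp₀
  · simp
  rcases hp₁.eq_or_lt with rfl | hp₁
  · simp
  set q := 1 - p
  have hq : 0 < q := sub_pos.2 hp₁
  have hpq : p + q = 1 := by ring
  have hqp : q + p = 1 := by ring
  have hlog_p : ∫ t in (0 : ℝ)..1, q / (p + t * q) = -log p := by
    simp [integral_div_add_mul hp₀ (hpq ▸ one_pos), hpq]
  have hlog_q : ∫ t in (0 : ℝ)..1, p / (q + t * p) = -log q := by
    simp [integral_div_add_mul hq (hqp ▸ one_pos), hqp]
  have hlog_two : ∫ t in (0 : ℝ)..1, 1 / (1 + t * 1) = log 2 := by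
    rw [integral_div_add_mul one_pos (by norm_num)]; norm_num
  have hint_p := (intervalIntegrable_div_add_mul hp₀ (hpq ▸ one_pos)).const_mul p
  have hint_q := (intervalIntegrable_div_add_mul hq (hqp ▸ one_pos)).const_mul q
  calc 4 * log 2 * (p * q) = ∫ t in (0 : ℝ)..1, 4 * (p * q) * (1 / (1 + t * 1)) := by
        rw [intervalIntegral.integral_const_mul, hlog_two]; ring
    _ ≤ ∫ t in (0 : ℝ)..1, (p * (q / (p + t * q)) + q * (p / (q + t * p))) := by
        refine intervalIntegral.integral_mono_on zero_le_one
          ((intervalIntegrable_div_add_mul one_pos (by norm_num)).const_mul _) (hint_p.add hint_q)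
          fun t ht => ?_
        have hsum : (p + t * q) + (q + t * p) = 1 + t * 1 := by linear_combination (1 + t) * hpq
        have := four_div_add_le_inv_add_inv (add_mul_pos_of_mem_Icc hp₀ (hpq ▸ one_pos) ht)
          (add_mul_pos_of_mem_Icc hq (hqp ▸ one_pos) ht)
        rw [hsum] at this
        calc 4 * (p * q) * (1 / (1 + t * 1)) = p * q * (4 / (1 + t * 1)) := by ring
          _ ≤ p * q * ((p + t * q)⁻¹ + (q + t * p)⁻¹) := by gcongr
          _ = p * (q / (p + t * q)) + q * (p / (q + t * p)) := by ring
    _ = binEntropy p := by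
        rw [intervalIntegral.integral_add hint_p hint_q, intervalIntegral.integral_const_mul,
          intervalIntegral.integral_const_mul, hlog_p, hlog_q, binEntropy, log_inv, log_inv]

lemma H_eq_binEntropy_div_log_two (x : ℝ) : H x = binEntropy x / log 2 := by
  rw [H, binEntropy, logb, logb, log_inv, log_inv]; ring

lemma four_mul_mul_one_sub_le_H {x : ℝ} (hx₀ : 0 ≤ x) (hx₁ : x ≤ 1) : 4 * x * (1 - x) ≤ H x := by
  rw [H_eq_binEntropy_div_log_two, le_div_iff₀ (log_pos one_lt_two)]
  linarith [four_mul_log_two_mul_le_binEntropy hx₀ hx₁]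

lemma one_le_H_add_H_half_add {x r : ℝ} (hx₀ : 0 ≤ x) (hx₁ : x ≤ 1) (hr : r ^ 2 ≤ x * (1 - x)) :
    1 ≤ H x + H (1 / 2 + r) := by
  have hr_quarter : r ^ 2 ≤ 1 / 4 := by nlinarith [sq_nonneg (x - 1 / 2)]
  have hHx := four_mul_mul_one_sub_le_H hx₀ hx₁
  have hHr := four_mul_mul_one_sub_le_H (x := 1 / 2 + r) (by nlinarith) (by nlinarith)
  nlinarith

lemma Uab_mulVec_psi_zero (a b : ℂ) (θ : ℝ) :
    (Uab a b *ᵥ psi θ) 0 = (a + b * Complex.exp (θ * Complex.I)) / (√2 : ℝ) := by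
  simp [Uab, psi, mulVec, dotProduct, Fin.sum_univ_two]
  ring

lemma abs_sq_norm_Uab_mulVec_psi_zero_sub_half_le {a b : ℂ} (hab : ‖a‖ ^ 2 + ‖b‖ ^ 2 = 1) (θ : ℝ) :
    |‖(Uab a b *ᵥ psi θ) 0‖ ^ 2 - 1 / 2| ≤ ‖a‖ * ‖b‖ := by
  set w := b * Complex.exp (θ * Complex.I)
  have hw : ‖w‖ = ‖b‖ := by simp [w, Complex.norm_exp]
  have hsq : ‖(Uab a b *ᵥ psi θ) 0‖ ^ 2 - 1 / 2 = (a * (starRingEnd ℂ) w).re := by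
    rw [Uab_mulVec_psi_zero, Complex.sq_norm, Complex.normSq_div, Complex.normSq_add,
      Complex.normSq_ofReal, Real.mul_self_sqrt zero_le_two, ← Complex.sq_norm,
      ← Complex.sq_norm, hw]
    linear_combination hab / 2
  calc |‖(Uab a b *ᵥ psi θ) 0‖ ^ 2 - 1 / 2| ≤ ‖a * (starRingEnd ℂ) w‖ :=
        hsq ▸ Complex.abs_re_le_norm _
    _ = ‖a‖ * ‖b‖ := by rw [norm_mul, Complex.norm_conj, hw]

theorem cohering_power_ge_decohering_power_relent_qubit
    (a b : ℂ) (hab : ‖a‖ ^ 2 + ‖b‖ ^ 2 = 1) :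
    (∀ θ : ℝ,
      1 - H (‖(Uab a b).mulVec (psi θ) 0‖ ^ 2) ≤ H (‖a‖ ^ 2)) ∧
    1 ≤ H (‖a‖ ^ 2) + H (1 / 2 + ‖a‖ * ‖b‖) := by
  have ha₁ : ‖a‖ ^ 2 ≤ 1 := by nlinarith [sq_nonneg ‖b‖]
  have hb : ‖a‖ ^ 2 * (1 - ‖a‖ ^ 2) = (‖a‖ * ‖b‖) ^ 2 := by linear_combination -‖a‖ ^ 2 * hab
  refine ⟨fun θ => ?_, one_le_H_add_H_half_add (sq_nonneg _) ha₁ hb.ge⟩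
  have hr := abs_sq_norm_Uab_mulVec_psi_zero_sub_half_le hab θ
  have := one_le_H_add_H_half_add (sq_nonneg _) ha₁
    (hb ▸ sq_le_sq' (abs_le.1 hr).1 (abs_le.1 hr).2)
  rw [add_sub_cancel] at this
  linarith
end
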